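/- arXiv:2110.14062 — 2 statements merged into one kernel-verified Lean document; each statement's English description precedes it below -/
import Mathlib

section
/- Let P ⊆ ℝⁿ be a polytope. There is a surjection from the set of pairs of nonempty faces (F,G) of P with codim(cone(−N_P(F) ∪ N_P(G))) = 1 onto the set of directions, up to nonzero scalar multiple, of the edges of P ∩ ρ_zP over all z ∈ P: each such pair (F,G) determines an edge G ∩ ρ_zF of P ∩ ρ_zP for any z ∈ (relint(F)+relint(G))/2, and every edge of P ∩ ρ_zP arises in this way. -/
open scoped BigOperators

noncomputable section

/-- Vectors in `ℝⁿ`. -/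
abbrev Vec (n : ℕ) := Fin n → ℝ

/-- The standard scalar product on `ℝⁿ`. -/
def dot {n : ℕ} (x y : Vec n) : ℝ := ∑ i, x i * y i

/-- A polytope is the convex hull of a finite set of points. -/
def IsPolytope {n : ℕ} (P : Set (Vec n)) : Prop :=
  ∃ S : Finset (Vec n), P = convexHull ℝ (S : Set (Vec n))

/-- A face of `P`: either `P` itself (take `c = 0`) or the subset of `P` where some linear
functional attains its maximum over `P`. -/
def IsFace {n : ℕ} (P F : Set (Vec n)) : Prop :=
  ∃ c : Vec n, F = {x ∈ P | ∀ y ∈ P, dot c y ≤ dot c x}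

/-- Dimension of a subset of `ℝⁿ`: the rank of the direction of its affine span. -/
noncomputable def sdim {n : ℕ} (A : Set (Vec n)) : ℕ :=
  Module.finrank ℝ (affineSpan ℝ A).direction

/-- The normal cone of a face `F` of `P`. -/
def normalCone {n : ℕ} (P F : Set (Vec n)) : Set (Vec n) :=
  {c | F ⊆ {x ∈ P | ∀ y ∈ P, dot c y ≤ dot c x}}

/-- `coneOf X`: nonnegative linear combinations of finitely many elements of `X`. -/
def coneOf {n : ℕ} (X : Set (Vec n)) : Set (Vec n) :=
  {v | ∃ (k : ℕ) (x : Fin k → Vec n) (l : Fin k → ℝ),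
      (∀ i, x i ∈ X) ∧ (∀ i, 0 ≤ l i) ∧ v = ∑ i, l i • x i}

/-- The reflection `ρ_z P = 2z - P` of `P` with respect to `z`. -/
def reflP {n : ℕ} (z : Vec n) (P : Set (Vec n)) : Set (Vec n) :=
  (fun x => (2 : ℝ) • z - x) '' P

/-- An edge is a 1-dimensional face. -/
def IsEdge {n : ℕ} (P E : Set (Vec n)) : Prop := IsFace P E ∧ sdim E = 1

/-- `(P, v)` is oriented if `v` is not perpendicular to any edge of `P`. -/
def Oriented {n : ℕ} (P : Set (Vec n)) (v : Vec n) : Prop :=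
  ∀ E, IsEdge P E → ∀ d ∈ (affineSpan ℝ E).direction, d ≠ 0 → dot d v ≠ 0

/-- `(P, v)` is positively oriented if `(P ∩ ρ_z P, v)` is oriented for every `z ∈ P`. -/
def PosOriented {n : ℕ} (P : Set (Vec n)) (v : Vec n) : Prop :=
  ∀ z ∈ P, Oriented (P ∩ reflP z P) v

/-- `x` is the minimizer of `⟨-, v⟩` on `P`. -/
def IsBotOf {n : ℕ} (P : Set (Vec n)) (v x : Vec n) : Prop :=
  x ∈ P ∧ ∀ y ∈ P, dot v x ≤ dot v y

/-- `x` is the maximizer of `⟨-, v⟩` on `P`. -/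
def IsTopOf {n : ℕ} (P : Set (Vec n)) (v x : Vec n) : Prop :=
  x ∈ P ∧ ∀ y ∈ P, dot v y ≤ dot v x

/-- `(P, v)` is quasi-oriented if `⟨-, v⟩` has a unique minimizer and a unique maximizer on `P`. -/
def QuasiOriented {n : ℕ} (P : Set (Vec n)) (v : Vec n) : Prop :=
  (∃! x, IsBotOf P v x) ∧ (∃! x, IsTopOf P v x)

/-- `(P, v)` is quasi-positively oriented if `(P ∩ ρ_z P, v)` is quasi-oriented for all `z ∈ P`. -/
def QuasiPosOriented {n : ℕ} (P : Set (Vec n)) (v : Vec n) : Prop :=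
  ∀ z ∈ P, QuasiOriented (P ∩ reflP z P) v

/-- The polytope `P^φ = π^φ(P × P) ⊆ ℝ^{n+1}`, where `π^φ(x,y) = ((x+y)/2, ⟨x - y, v⟩)`. -/
def Pphi {n : ℕ} (P : Set (Vec n)) (v : Vec n) : Set (Vec (n + 1)) :=
  {w | ∃ x ∈ P, ∃ y ∈ P, w = Fin.snoc ((1 / 2 : ℝ) • (x + y)) (dot (x - y) v)}

/-- The pair of faces `(F, G)` belongs to `F^φ`: there are no `x ∈ F`, `y ∈ G`, `λ > 0` with
`(π(x,y), φ(x,y) - λ) ∈ P^φ`. -/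
def InFphi {n : ℕ} (P : Set (Vec n)) (v : Vec n) (F G : Set (Vec n)) : Prop :=
  ¬ ∃ x ∈ F, ∃ y ∈ G, ∃ lam : ℝ, 0 < lam ∧
      (Fin.snoc ((1 / 2 : ℝ) • (x + y)) (dot (x - y) v - lam) : Vec (n + 1)) ∈ Pphi P v

/-- The set `(A + B)/2`. -/
def avgSet {n : ℕ} (A B : Set (Vec n)) : Set (Vec n) :=
  {z | ∃ x ∈ A, ∃ y ∈ B, z = (1 / 2 : ℝ) • (x + y)}

/-- The coherent subdivision `π(F^φ)` is tight. -/
def TightSub {n : ℕ} (P : Set (Vec n)) (v : Vec n) : Prop :=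
  ∀ F G : Set (Vec n), IsFace P F → IsFace P G → F.Nonempty → G.Nonempty →
    InFphi P v F G → sdim F + sdim G = sdim (avgSet F G)

/-- `d` is a direction of an edge of `P ∩ ρ_z P` for some `z ∈ P`; the hyperplanes of the
fundamental hyperplane arrangement `H_P` are the orthogonal complements of such directions. -/
def EdgeDir {n : ℕ} (P : Set (Vec n)) (d : Vec n) : Prop :=
  d ≠ 0 ∧ ∃ z ∈ P, ∃ E, IsEdge (P ∩ reflP z P) E ∧ d ∈ (affineSpan ℝ E).direction

/-- The cone `cone(-N_P(F) ∪ N_P(G))`. -/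
def diagCone {n : ℕ} (P F G : Set (Vec n)) : Set (Vec n) :=
  coneOf ((Neg.neg '' normalCone P F) ∪ normalCone P G)

/-!
Write `F = argmaxSet a P`, `G = argmaxSet b P` and `z = (f + g) / 2` with `f ∈ relint F`,
`g ∈ relint G`. On `P ∩ ρ_z P` the functional `b - a` agrees with `b + a ∘ ρ_z` up to a constant,
so its argmax there is `G ∩ ρ_z F`; moving from `g` along any `d ∈ lin F ∩ lin G` stays in
`G ∩ ρ_z F`, so the direction of `G ∩ ρ_z F` is exactly `lin F ∩ lin G`. For a polytope the normal
cone of a face spans `(lin F)^⊥` (perturb `b` by a small multiple of any `d ⊥ lin F`), hence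
`span cone(-N_P(F) ∪ N_P(G)) = (lin F ∩ lin G)^⊥`, and the codimension-one condition says that
`G ∩ ρ_z F` is an edge. Conversely, for an edge `E` of `P ∩ ρ_z P` pick `e ∈ relint E` and let `G`,
`F` be the faces of `P` containing `e` and `2z - e` in their relative interiors (every point of a
polytope is in the relative interior of a face, by separation and induction on the vertices);
then `E = G ∩ ρ_z F`.
-/

variable {n : ℕ}

lemma mem_intrinsicInterior_iff_mem_interior {C : Set (Vec n)} {e : Vec n}
    (he : e ∈ affineSpan ℝ C) (v : (affineSpan ℝ C).direction) :
    ↑v + e ∈ intrinsicInterior ℝ C ↔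
      v ∈ interior {w : (affineSpan ℝ C).direction | ↑w + e ∈ C} := by
  have : Nonempty (affineSpan ℝ C) := ⟨⟨e, he⟩⟩
  let h := (AffineIsometryEquiv.vaddConst ℝ (⟨e, he⟩ : affineSpan ℝ C)).toHomeomorph
  have hK : {w : (affineSpan ℝ C).direction | ↑w + e ∈ C} = h ⁻¹' ((↑) ⁻¹' C) := rfl
  rw [hK, ← h.preimage_interior, mem_intrinsicInterior]
  constructor
  · rintro ⟨y, hy, hye⟩
    obtain rfl : y = h v := Subtype.ext hye
    exact hy
  · exact fun hv => ⟨h v, hv, rfl⟩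

lemma exists_add_smul_mem_of_mem_intrinsicInterior {C : Set (Vec n)} {x d : Vec n}
    (hx : x ∈ intrinsicInterior ℝ C) (hd : d ∈ vectorSpan ℝ C) :
    ∃ ε > (0 : ℝ), ∀ t : ℝ, |t| ≤ ε → x + t • d ∈ C := by
  have hxA : x ∈ affineSpan ℝ C := subset_affineSpan ℝ C (intrinsicInterior_subset hx)
  rw [← direction_affineSpan] at hd
  have h0 := (mem_intrinsicInterior_iff_mem_interior hxA 0).1 (by simpa using hx)
  have hlim : Filter.Tendsto (fun t : ℝ => t • (⟨d, hd⟩ : (affineSpan ℝ C).direction))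
      (nhds 0) (nhds 0) :=
    (continuous_id.smul continuous_const).tendsto' 0 0 (zero_smul ℝ _)
  obtain ⟨ε, hε, hball⟩ :=
    Metric.eventually_nhds_iff.1 (hlim.eventually (mem_interior_iff_mem_nhds.1 h0))
  refine ⟨ε / 2, by positivity, fun t ht => ?_⟩
  have ht' : dist t 0 < ε := by rw [dist_zero_right, Real.norm_eq_abs]; linarith
  simpa [add_comm] using hball ht'

def argmaxSet (c : Vec n) (P : Set (Vec n)) : Set (Vec n) :=
  {x ∈ P | ∀ y ∈ P, c ⬝ᵥ y ≤ c ⬝ᵥ x}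

lemma isFace_iff {P F : Set (Vec n)} : IsFace P F ↔ ∃ c, F = argmaxSet c P := Iff.rfl

lemma argmaxSet_zero (P : Set (Vec n)) : argmaxSet 0 P = P := by
  simp [argmaxSet]

lemma convex_argmaxSet {P : Set (Vec n)} (hP : Convex ℝ P) (c : Vec n) :
    Convex ℝ (argmaxSet c P) := by
  rintro x ⟨hxP, hx⟩ y ⟨hyP, hy⟩ a b ha hb hab
  refine ⟨hP hxP hyP ha hb hab, fun u hu => ?_⟩
  simp only [dotProduct_add, dotProduct_smul, smul_eq_mul]
  have hu' : c ⬝ᵥ u = a * c ⬝ᵥ u + b * c ⬝ᵥ u := by rw [← add_mul, hab, one_mul]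
  linarith [mul_le_mul_of_nonneg_left (hx u hu) ha, mul_le_mul_of_nonneg_left (hy u hu) hb]

lemma exists_argmaxSet_ne_of_notMem_intrinsicInterior {C : Set (Vec n)} (hC : Convex ℝ C)
    {e : Vec n} (he : e ∈ C) (hne : e ∉ intrinsicInterior ℝ C) :
    ∃ b, e ∈ argmaxSet b C ∧ argmaxSet b C ≠ C := by
  -- separate `0` from the interior of `K` inside the direction `V` of the affine span, then
  -- extend the separating functional from `V` to `Vec n`
  set V := (affineSpan ℝ C).direction
  have heA : e ∈ affineSpan ℝ C := subset_affineSpan ℝ C he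
  have hV : ∀ {y}, y ∈ C → y - e ∈ V := fun hy =>
    AffineSubspace.vsub_mem_direction (subset_affineSpan ℝ C hy) heA
  set K := {w : V | ↑w + e ∈ C}
  have hK : Convex ℝ K := fun w₁ h₁ w₂ h₂ a b ha hb hab => by
    have := hC h₁ h₂ ha hb hab
    simp only [K, Set.mem_ofPred_eq, Submodule.coe_add, Submodule.coe_smul] at this ⊢
    convert this using 1
    rw [smul_add, smul_add, add_add_add_comm, ← add_smul, hab, one_smul]
  have h0 : (0 : V) ∉ interior K := by
    rwa [← mem_intrinsicInterior_iff_mem_interior heA, Submodule.coe_zero, zero_add]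
  obtain ⟨y₀, hy₀⟩ := Set.Nonempty.intrinsicInterior hC ⟨e, he⟩
  have hy₀K : (⟨y₀ - e, hV (intrinsicInterior_subset hy₀)⟩ : V) ∈ interior K := by
    rw [← mem_intrinsicInterior_iff_mem_interior heA]
    simpa using hy₀
  obtain ⟨f, hf⟩ := geometric_hahn_banach_open_point hK.interior isOpen_interior h0
  have hfK : ∀ w ∈ K, f w ≤ 0 := by
    have : closure (interior K) ⊆ {w | f w ≤ 0} :=
      closure_minimal (fun w hw => by simpa using (hf w hw).le)
        (isClosed_le f.continuous continuous_const)
    rw [hK.closure_interior_eq_closure_of_nonempty_interior ⟨_, hy₀K⟩] at this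
    exact fun w hw => this (subset_closure hw)
  obtain ⟨g, hg⟩ := V.subtype.exists_leftInverse_of_injective V.ker_subtype
  set b := (dotProductEquiv ℝ (Fin n)).symm (f.toLinearMap ∘ₗ g)
  have hb : ∀ {y}, (hy : y ∈ C) → b ⬝ᵥ y - b ⬝ᵥ e = f ⟨y - e, hV hy⟩ := fun {y} hy => by
    rw [← dotProduct_sub, ← dotProductEquiv_apply_apply ℝ, LinearEquiv.apply_symm_apply]
    simpa using congrArg f (LinearMap.congr_fun hg ⟨y - e, hV hy⟩)
  refine ⟨b, ⟨he, fun y hy => ?_⟩, fun h => ?_⟩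
  · linarith [hb hy, hfK _ (show ↑(⟨y - e, hV hy⟩ : V) + e ∈ C by simpa using hy)]
  · have hy₀C := intrinsicInterior_subset hy₀
    have hle := (show y₀ ∈ argmaxSet b C by rwa [h]).2 e he
    have hlt : f ⟨y₀ - e, hV hy₀C⟩ < 0 := by simpa using hf _ hy₀K
    linarith [hb hy₀C]

lemma dotProduct_le_of_mem_convexHull {S : Set (Vec n)} {c x : Vec n} {M : ℝ}
    (hS : ∀ s ∈ S, c ⬝ᵥ s ≤ M) (hx : x ∈ convexHull ℝ S) : c ⬝ᵥ x ≤ M :=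
  convexHull_min hS (convex_halfSpace_le (dotProductBilin ℝ ℝ c).isLinear M) hx

lemma argmaxSet_convexHull (S : Finset (Vec n)) {c s₀ : Vec n} (hs₀ : s₀ ∈ S)
    (hmax : ∀ s ∈ S, c ⬝ᵥ s ≤ c ⬝ᵥ s₀) :
    argmaxSet c (convexHull ℝ ↑S) = convexHull ℝ ↑{s ∈ S | c ⬝ᵥ s = c ⬝ᵥ s₀} := by
  set N := c ⬝ᵥ s₀
  have hbound : ∀ x ∈ convexHull ℝ ↑S, c ⬝ᵥ x ≤ N := fun x => dotProduct_le_of_mem_convexHull hmax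
  apply Set.Subset.antisymm
  · rintro x ⟨hx, hxmax⟩
    have hNx : N ≤ c ⬝ᵥ x := hxmax s₀ (subset_convexHull ℝ _ hs₀)
    obtain ⟨w, hw0, hw1, rfl⟩ := Finset.mem_convexHull'.1 hx
    have hterm : ∀ s ∈ S, 0 ≤ w s * (N - c ⬝ᵥ s) := fun s hs =>
      mul_nonneg (hw0 s hs) (sub_nonneg.2 (hmax s hs))
    -- the defect `N - c ⬝ᵥ x` is a nonnegative combination of the defects of the vertices
    have hsum : ∑ s ∈ S, w s * (N - c ⬝ᵥ s) = 0 := by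
      refine le_antisymm ?_ (Finset.sum_nonneg hterm)
      have : ∑ s ∈ S, w s * (N - c ⬝ᵥ s) = N - c ⬝ᵥ ∑ s ∈ S, w s • s := by
        simp only [mul_sub, Finset.sum_sub_distrib, ← Finset.sum_mul, hw1, one_mul,
          dotProduct_sum, dotProduct_smul, smul_eq_mul]
      linarith
    have hw : ∀ s ∈ S, w s ≠ 0 → c ⬝ᵥ s = N := fun s hs hws => by
      have := (Finset.sum_eq_zero_iff_of_nonneg hterm).1 hsum s hs
      linarith [(mul_eq_zero.1 this).resolve_left hws]
    refine Finset.mem_convexHull'.2 ⟨w, fun s hs => hw0 s (Finset.mem_filter.1 hs).1, ?_, ?_⟩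
    · rwa [Finset.sum_filter_of_ne fun s hs hws => hw s hs hws]
    · exact Finset.sum_filter_of_ne fun s hs hws => hw s hs (left_ne_zero_of_smul hws)
  · refine convexHull_min (fun s hs => ?_) (convex_argmaxSet (convex_convexHull ℝ _) c)
    obtain ⟨hsS, hsN⟩ := Finset.mem_filter.1 hs
    exact ⟨subset_convexHull ℝ _ hsS, fun y hy => hsN ▸ hbound y hy⟩

lemma exists_pos_forall_mul_lt {α : Type*} (S : Finset α) (p q : α → ℝ) :
    ∃ t > 0, ∀ s ∈ S, 0 < p s → t * q s < p s := by
  have : ∀ᶠ t in nhdsWithin (0 : ℝ) (Set.Ioi 0), ∀ s ∈ S, 0 < p s → t * q s < p s := by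
    refine (Filter.eventually_all_finset S).2 fun s _ =>
      Filter.eventually_imp_distrib_left.2 fun hs => nhdsWithin_le_nhds ?_
    exact ((continuous_mul_const (q s)).tendsto' 0 0 (zero_mul _)).eventually (gt_mem_nhds hs)
  obtain ⟨t, ht, ht0⟩ := (this.and self_mem_nhdsWithin).exists
  exact ⟨t, ht0, ht⟩

lemma exists_argmaxSet_add_smul_eq (S : Finset (Vec n)) (b b' : Vec n) :
    ∃ t > (0 : ℝ), argmaxSet (b + t • b') (convexHull ℝ ↑S) =
      argmaxSet b' (argmaxSet b (convexHull ℝ ↑S)) := by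
  rcases S.eq_empty_or_nonempty with rfl | hS
  · exact ⟨1, one_pos, by simp [argmaxSet]⟩
  obtain ⟨s₀, hs₀, hs₀max⟩ := S.exists_max_image (b ⬝ᵥ ·) hS
  set T := {s ∈ S | b ⬝ᵥ s = b ⬝ᵥ s₀}
  obtain ⟨x₀, hx₀T, hx₀max⟩ := T.exists_max_image (b' ⬝ᵥ ·) ⟨s₀, by simp [T, hs₀]⟩
  obtain ⟨hx₀S, hx₀b⟩ := Finset.mem_filter.1 hx₀T
  obtain ⟨t, ht, htS⟩ := exists_pos_forall_mul_lt S (fun s => b ⬝ᵥ s₀ - b ⬝ᵥ s)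
    (fun s => b' ⬝ᵥ s - b' ⬝ᵥ x₀)
  set c := b + t • b'
  have hc : ∀ s, c ⬝ᵥ s = b ⬝ᵥ s + t * b' ⬝ᵥ s := fun s => by
    rw [add_dotProduct, smul_dotProduct, smul_eq_mul]
  have key : ∀ s ∈ S, c ⬝ᵥ s ≤ c ⬝ᵥ x₀ ∧ (c ⬝ᵥ s = c ⬝ᵥ x₀ ↔ s ∈ T ∧ b' ⬝ᵥ s = b' ⬝ᵥ x₀) := by
    intro s hs
    simp only [hc, T, Finset.mem_filter, hs, true_and]
    rcases (hs₀max s hs).lt_or_eq with hlt | heq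
    · have := htS s hs (by simpa using hlt)
      refine ⟨by linarith, fun h => absurd h (by linarith), fun h => absurd h.1 hlt.ne⟩
    · have := hx₀max s (by simp [T, hs, heq])
      refine ⟨by nlinarith, fun h => ⟨heq, by nlinarith⟩, fun h => by rw [h.2]; linarith⟩
  refine ⟨t, ht, ?_⟩
  rw [argmaxSet_convexHull S hs₀ hs₀max, argmaxSet_convexHull T hx₀T hx₀max,
    argmaxSet_convexHull S hx₀S fun s hs => (key s hs).1]
  congr 2
  ext s
  simp only [Finset.mem_filter]
  exact ⟨fun ⟨hs, h⟩ => (key s hs).2.1 h,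
    fun ⟨hsT, h⟩ => ⟨(Finset.mem_filter.1 hsT).1, (key s (Finset.mem_filter.1 hsT).1).2.2 ⟨hsT, h⟩⟩⟩

lemma exists_mem_intrinsicInterior_argmaxSet (S : Finset (Vec n)) {e : Vec n}
    (he : e ∈ convexHull ℝ ↑S) : ∃ b, e ∈ intrinsicInterior ℝ (argmaxSet b (convexHull ℝ ↑S)) := by
  induction S using Finset.strongInduction with
  | H S ih =>
  by_cases hrel : e ∈ intrinsicInterior ℝ (convexHull ℝ ↑S)
  · exact ⟨0, by rwa [argmaxSet_zero]⟩
  obtain ⟨b, heb, hne⟩ :=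
    exists_argmaxSet_ne_of_notMem_intrinsicInterior (convex_convexHull ℝ _) he hrel
  obtain ⟨s₀, hs₀, hs₀max⟩ := S.exists_max_image (b ⬝ᵥ ·)
    (Finset.coe_nonempty.1 (convexHull_nonempty_iff.1 ⟨e, he⟩))
  have hface := argmaxSet_convexHull S hs₀ hs₀max
  have hsub : {s ∈ S | b ⬝ᵥ s = b ⬝ᵥ s₀} ⊂ S := by
    refine Finset.filter_ssubset.2 ?_
    by_contra! h
    exact hne (by rw [hface, Finset.filter_true_of_mem h])
  obtain ⟨b', hb'⟩ := ih _ hsub (hface ▸ heb)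
  obtain ⟨t, -, ht⟩ := exists_argmaxSet_add_smul_eq S b b'
  exact ⟨b + t • b', by rwa [ht, hface]⟩

def dotOrth (U : Submodule ℝ (Vec n)) : Submodule ℝ (Vec n) :=
  U.dualAnnihilator.map ((dotProductEquiv ℝ (Fin n)).symm : Module.Dual ℝ (Vec n) →ₗ[ℝ] Vec n)

lemma mem_dotOrth {U : Submodule ℝ (Vec n)} {c : Vec n} : c ∈ dotOrth U ↔ ∀ u ∈ U, c ⬝ᵥ u = 0 := by
  simp [dotOrth, Submodule.mem_map_equiv, Submodule.mem_dualAnnihilator]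

lemma finrank_dotOrth_add_finrank (U : Submodule ℝ (Vec n)) :
    Module.finrank ℝ (dotOrth U) + Module.finrank ℝ U = n := by
  rw [dotOrth, LinearEquiv.finrank_map_eq, add_comm,
    Subspace.finrank_add_finrank_dualAnnihilator_eq, Module.finrank_fin_fun]

lemma dotOrth_inf (U W : Submodule ℝ (Vec n)) : dotOrth (U ⊓ W) = dotOrth U ⊔ dotOrth W := by
  rw [dotOrth, Subspace.dualAnnihilator_inf_eq, Submodule.map_sup, dotOrth, dotOrth]

lemma mem_dotOrth_vectorSpan {G : Set (Vec n)} {c : Vec n} :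
    c ∈ dotOrth (vectorSpan ℝ G) ↔ ∀ x ∈ G, ∀ y ∈ G, c ⬝ᵥ x = c ⬝ᵥ y := by
  rw [mem_dotOrth]
  constructor
  · intro h x hx y hy
    rw [← sub_eq_zero, ← dotProduct_sub]
    exact h _ (vsub_mem_vectorSpan ℝ hx hy)
  · intro h u hu
    have : vectorSpan ℝ G ≤ LinearMap.ker (dotProductEquiv ℝ (Fin n) c) := by
      rw [vectorSpan_def, Submodule.span_le]
      rintro _ ⟨x, hx, y, hy, rfl⟩
      simp [dotProduct_sub, h x hx y hy]
    simpa using this hu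

lemma span_normalCone_argmaxSet (S : Finset (Vec n)) (b : Vec n) :
    Submodule.span ℝ (normalCone (convexHull ℝ ↑S) (argmaxSet b (convexHull ℝ ↑S))) =
      dotOrth (vectorSpan ℝ (argmaxSet b (convexHull ℝ ↑S))) := by
  set G := argmaxSet b (convexHull ℝ ↑S)
  apply le_antisymm
  · refine Submodule.span_le.2 fun c hc => mem_dotOrth_vectorSpan.2 fun x hx y hy => ?_
    exact le_antisymm ((hc hy).2 x (hc hx).1) ((hc hx).2 y (hc hy).1)
  · intro d hd
    obtain ⟨t, ht, hface⟩ := exists_argmaxSet_add_smul_eq S b d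
    have hbt : b + t • d ∈ normalCone (convexHull ℝ ↑S) G := by
      intro x hx
      change x ∈ argmaxSet (b + t • d) _
      rw [hface]
      exact ⟨hx, fun y hy => (mem_dotOrth_vectorSpan.1 hd y hy x hx).le⟩
    have hb : b ∈ normalCone (convexHull ℝ ↑S) G := fun x hx => hx
    have : d = t⁻¹ • ((b + t • d) - b) := by
      rw [add_sub_cancel_left, smul_smul, inv_mul_cancel₀ ht.ne', one_smul]
    rw [this]
    exact Submodule.smul_mem _ _
      (Submodule.sub_mem _ (Submodule.subset_span hbt) (Submodule.subset_span hb))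

lemma span_coneOf (X : Set (Vec n)) : Submodule.span ℝ (coneOf X) = Submodule.span ℝ X := by
  refine le_antisymm (Submodule.span_le.2 ?_) (Submodule.span_mono fun x hx => ?_)
  · rintro _ ⟨k, x, l, hx, -, rfl⟩
    exact Submodule.sum_mem _ fun i _ => Submodule.smul_mem _ _ (Submodule.subset_span (hx i))
  · exact ⟨1, fun _ => x, fun _ => 1, fun _ => hx, fun _ => zero_le_one, by simp⟩

lemma span_diagCone (P F G : Set (Vec n)) :
    Submodule.span ℝ (diagCone P F G) =
      Submodule.span ℝ (normalCone P F) ⊔ Submodule.span ℝ (normalCone P G) := by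
  rw [diagCone, span_coneOf, Submodule.span_union, Set.image_neg_eq_neg, Submodule.span_neg]

lemma finrank_span_diagCone_add_finrank (S : Finset (Vec n)) (a b : Vec n) :
    Module.finrank ℝ (Submodule.span ℝ (diagCone (convexHull ℝ ↑S)
        (argmaxSet a (convexHull ℝ ↑S)) (argmaxSet b (convexHull ℝ ↑S)))) +
      Module.finrank ℝ (vectorSpan ℝ (argmaxSet a (convexHull ℝ ↑S)) ⊓
        vectorSpan ℝ (argmaxSet b (convexHull ℝ ↑S)) : Submodule ℝ (Vec n)) = n := by
  rw [span_diagCone, span_normalCone_argmaxSet, span_normalCone_argmaxSet, ← dotOrth_inf,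
    finrank_dotOrth_add_finrank]

lemma sdim_eq_finrank_vectorSpan (E : Set (Vec n)) :
    sdim E = Module.finrank ℝ (vectorSpan ℝ E) := by
  rw [sdim, direction_affineSpan]

lemma nonempty_of_sdim_eq_one {E : Set (Vec n)} (h : sdim E = 1) : E.Nonempty := by
  rw [Set.nonempty_iff_ne_empty]
  rintro rfl
  rw [sdim_eq_finrank_vectorSpan, vectorSpan_empty, finrank_bot] at h
  exact zero_ne_one h

lemma mem_reflP {z x : Vec n} {P : Set (Vec n)} : x ∈ reflP z P ↔ (2 : ℝ) • z - x ∈ P := by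
  refine ⟨?_, fun h => ⟨_, h, sub_sub_cancel _ _⟩⟩
  rintro ⟨y, hy, rfl⟩
  rwa [sub_sub_cancel]

lemma convex_reflP (z : Vec n) {P : Set (Vec n)} (hP : Convex ℝ P) : Convex ℝ (reflP z P) := by
  simpa [reflP, sub_eq_add_neg] using hP.affinity ((2 : ℝ) • z) (-1)

lemma argmaxSet_sub_inter_reflP {P : Set (Vec n)} {a b f g z : Vec n}
    (hf : f ∈ argmaxSet a P) (hg : g ∈ argmaxSet b P) (hz : f + g = (2 : ℝ) • z) :
    argmaxSet (b - a) (P ∩ reflP z P) = argmaxSet b P ∩ reflP z (argmaxSet a P) := by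
  have hgf : (2 : ℝ) • z - g = f := by rw [← hz, add_sub_cancel_right]
  have key : ∀ x, (b - a) ⬝ᵥ x = b ⬝ᵥ x + a ⬝ᵥ ((2 : ℝ) • z - x) - 2 * a ⬝ᵥ z := fun x => by
    simp only [sub_dotProduct, dotProduct_sub, dotProduct_smul, smul_eq_mul]
    ring
  have hgQ : g ∈ P ∩ reflP z P := ⟨hg.1, mem_reflP.2 (hgf ▸ hf.1)⟩
  ext x
  constructor
  · rintro ⟨⟨hxP, hxR⟩, hmax⟩
    rw [mem_reflP] at hxR
    have h1 := hg.2 x hxP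
    have h2 := hf.2 _ hxR
    have h3 := hmax g hgQ
    rw [key, key, hgf] at h3
    exact ⟨⟨hxP, fun y hy => by linarith [hg.2 y hy]⟩,
      mem_reflP.2 ⟨hxR, fun y hy => by linarith [hf.2 y hy]⟩⟩
  · rintro ⟨⟨hxP, hxb⟩, hxR⟩
    obtain ⟨hxR, hxa⟩ := mem_reflP.1 hxR
    refine ⟨⟨hxP, mem_reflP.2 hxR⟩, fun y hy => ?_⟩
    rw [key, key]
    linarith [hxb y hy.1, hxa _ (mem_reflP.1 hy.2)]

lemma vectorSpan_inter_reflP_le (z : Vec n) (F G : Set (Vec n)) :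
    vectorSpan ℝ (G ∩ reflP z F) ≤ vectorSpan ℝ F ⊓ vectorSpan ℝ G := by
  rw [vectorSpan_def, Submodule.span_le]
  rintro _ ⟨x, hx, y, hy, rfl⟩
  refine ⟨?_, vsub_mem_vectorSpan ℝ hx.1 hy.1⟩
  have := vsub_mem_vectorSpan ℝ (mem_reflP.1 hy.2) (mem_reflP.1 hx.2)
  rwa [vsub_eq_sub, sub_sub_sub_cancel_left] at this

lemma exists_add_smul_mem_inter_reflP {F G : Set (Vec n)} {f g z d : Vec n}
    (hf : f ∈ intrinsicInterior ℝ F) (hg : g ∈ intrinsicInterior ℝ G) (hz : f + g = (2 : ℝ) • z)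
    (hd : d ∈ vectorSpan ℝ F ⊓ vectorSpan ℝ G) :
    ∃ ε > (0 : ℝ), ∀ t : ℝ, |t| ≤ ε → g + t • d ∈ G ∩ reflP z F := by
  obtain ⟨ε₁, hε₁, hF⟩ := exists_add_smul_mem_of_mem_intrinsicInterior hf hd.1
  obtain ⟨ε₂, hε₂, hG⟩ := exists_add_smul_mem_of_mem_intrinsicInterior hg hd.2
  refine ⟨min ε₁ ε₂, lt_min hε₁ hε₂, fun t ht => ⟨hG t (ht.trans (min_le_right _ _)), ?_⟩⟩
  rw [mem_reflP, ← hz, show f + g - (g + t • d) = f + (-t) • d by module]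
  exact hF (-t) (by rw [abs_neg]; exact ht.trans (min_le_left _ _))

lemma vectorSpan_inter_reflP {F G : Set (Vec n)} {f g z : Vec n}
    (hf : f ∈ intrinsicInterior ℝ F) (hg : g ∈ intrinsicInterior ℝ G) (hz : f + g = (2 : ℝ) • z) :
    vectorSpan ℝ (G ∩ reflP z F) = vectorSpan ℝ F ⊓ vectorSpan ℝ G := by
  refine le_antisymm (vectorSpan_inter_reflP_le z F G) fun d hd => ?_
  obtain ⟨ε, hε, h⟩ := exists_add_smul_mem_inter_reflP hf hg hz hd
  have hmem := vsub_mem_vectorSpan ℝ (h ε (abs_of_pos hε).le) (h 0 (by simpa using hε.le))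
  rw [vsub_eq_sub, zero_smul, add_zero, add_sub_cancel_left] at hmem
  simpa [hε.ne'] using Submodule.smul_mem _ ε⁻¹ hmem

lemma mem_argmaxSet_of_add_smul_sub_mem {Q : Set (Vec n)} {c e x : Vec n} {ε : ℝ}
    (he : e ∈ argmaxSet c Q) (hx : x ∈ Q) (hε : 0 < ε) (hext : e + ε • (e - x) ∈ Q) :
    x ∈ argmaxSet c Q := by
  have := he.2 _ hext
  rw [dotProduct_add, dotProduct_smul, dotProduct_sub, smul_eq_mul] at this
  have hx' : c ⬝ᵥ e ≤ c ⬝ᵥ x := by nlinarith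
  exact ⟨hx, fun y hy => (he.2 y hy).trans hx'⟩

lemma argmaxSet_inter_reflP_eq {P : Set (Vec n)} {c bF bG z e : Vec n}
    (he : e ∈ intrinsicInterior ℝ (argmaxSet c (P ∩ reflP z P)))
    (heG : e ∈ intrinsicInterior ℝ (argmaxSet bG P))
    (heF : (2 : ℝ) • z - e ∈ intrinsicInterior ℝ (argmaxSet bF P)) :
    argmaxSet c (P ∩ reflP z P) = argmaxSet bG P ∩ reflP z (argmaxSet bF P) := by
  have heE := intrinsicInterior_subset he
  apply Set.Subset.antisymm
  · intro x hx
    obtain ⟨ε, hε, h⟩ := exists_add_smul_mem_of_mem_intrinsicInterior he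
      (vsub_mem_vectorSpan ℝ hx heE)
    have hext := (h (-ε) (by rw [abs_neg, abs_of_pos hε])).1
    rw [vsub_eq_sub, neg_smul, ← smul_neg, neg_sub] at hext
    refine ⟨mem_argmaxSet_of_add_smul_sub_mem (intrinsicInterior_subset heG) hx.1.1 hε hext.1,
      mem_reflP.2 (mem_argmaxSet_of_add_smul_sub_mem (intrinsicInterior_subset heF)
        (mem_reflP.1 hx.1.2) hε ?_)⟩
    rw [show (2 : ℝ) • z - e + ε • ((2 : ℝ) • z - e - ((2 : ℝ) • z - x)) =
      (2 : ℝ) • z - (e + ε • (e - x)) by module]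
    exact mem_reflP.1 hext.2
  · intro x hx
    have hz : ((2 : ℝ) • z - e) + e = (2 : ℝ) • z := sub_add_cancel _ _
    have heGF : e ∈ argmaxSet bG P ∩ reflP z (argmaxSet bF P) :=
      ⟨intrinsicInterior_subset heG, mem_reflP.2 (intrinsicInterior_subset heF)⟩
    obtain ⟨ε, hε, h⟩ := exists_add_smul_mem_inter_reflP heF heG hz
      (vectorSpan_inter_reflP_le z _ _ (vsub_mem_vectorSpan ℝ heGF hx))
    have hQ : ∀ {y}, y ∈ argmaxSet bG P ∩ reflP z (argmaxSet bF P) → y ∈ P ∩ reflP z P :=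
      fun hy => ⟨hy.1.1, mem_reflP.2 (mem_reflP.1 hy.2).1⟩
    have hext := hQ (h ε (abs_of_pos hε).le)
    rw [vsub_eq_sub] at hext
    exact mem_argmaxSet_of_add_smul_sub_mem heE (hQ hx) hε hext

lemma isEdge_inter_reflP_of_finrank (S : Finset (Vec n)) (a b : Vec n) {z : Vec n}
    (hrank : Module.finrank ℝ (Submodule.span ℝ (diagCone (convexHull ℝ ↑S)
      (argmaxSet a (convexHull ℝ ↑S)) (argmaxSet b (convexHull ℝ ↑S)))) + 1 = n)
    (hz : z ∈ avgSet (intrinsicInterior ℝ (argmaxSet a (convexHull ℝ ↑S)))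
      (intrinsicInterior ℝ (argmaxSet b (convexHull ℝ ↑S)))) :
    IsEdge (convexHull ℝ ↑S ∩ reflP z (convexHull ℝ ↑S))
      (argmaxSet b (convexHull ℝ ↑S) ∩ reflP z (argmaxSet a (convexHull ℝ ↑S))) := by
  obtain ⟨f, hf, g, hg, rfl⟩ := hz
  have hfg : f + g = (2 : ℝ) • ((1 / 2 : ℝ) • (f + g)) := by module
  refine ⟨isFace_iff.2 ⟨b - a, (argmaxSet_sub_inter_reflP (intrinsicInterior_subset hf)
    (intrinsicInterior_subset hg) hfg).symm⟩, ?_⟩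
  rw [sdim_eq_finrank_vectorSpan, vectorSpan_inter_reflP hf hg hfg]
  exact Nat.add_left_cancel ((finrank_span_diagCone_add_finrank S a b).trans hrank.symm)

lemma exists_eq_inter_reflP_of_sdim_eq_one (S : Finset (Vec n)) {c z : Vec n}
    (hE : sdim (argmaxSet c (convexHull ℝ ↑S ∩ reflP z (convexHull ℝ ↑S))) = 1) :
    ∃ bF bG : Vec n, Module.finrank ℝ (Submodule.span ℝ (diagCone (convexHull ℝ ↑S)
        (argmaxSet bF (convexHull ℝ ↑S)) (argmaxSet bG (convexHull ℝ ↑S)))) + 1 = n ∧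
      z ∈ avgSet (intrinsicInterior ℝ (argmaxSet bF (convexHull ℝ ↑S)))
        (intrinsicInterior ℝ (argmaxSet bG (convexHull ℝ ↑S))) ∧
      argmaxSet c (convexHull ℝ ↑S ∩ reflP z (convexHull ℝ ↑S)) =
        argmaxSet bG (convexHull ℝ ↑S) ∩ reflP z (argmaxSet bF (convexHull ℝ ↑S)) := by
  have hQ : Convex ℝ (convexHull ℝ (S : Set (Vec n)) ∩ reflP z (convexHull ℝ ↑S)) :=
    (convex_convexHull ℝ _).inter (convex_reflP z (convex_convexHull ℝ _))
  obtain ⟨e, he⟩ := (nonempty_of_sdim_eq_one hE).intrinsicInterior (convex_argmaxSet hQ c)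
  obtain ⟨heP, heR⟩ := (intrinsicInterior_subset he).1
  obtain ⟨bG, hbG⟩ := exists_mem_intrinsicInterior_argmaxSet S heP
  obtain ⟨bF, hbF⟩ := exists_mem_intrinsicInterior_argmaxSet S (mem_reflP.1 heR)
  have hz : ((2 : ℝ) • z - e) + e = (2 : ℝ) • z := sub_add_cancel _ _
  have hEq := argmaxSet_inter_reflP_eq he hbG hbF
  have hdim := finrank_span_diagCone_add_finrank S bF bG
  rw [← vectorSpan_inter_reflP hbF hbG hz, ← hEq, ← sdim_eq_finrank_vectorSpan, hE] at hdim
  refine ⟨bF, bG, hdim, ⟨_, hbF, e, hbG, ?_⟩, hEq⟩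
  rw [hz, smul_smul]
  norm_num

/-- There is a surjection from the pairs of nonempty faces `(F, G)` of `P` with
`codim cone(-N_P(F) ∪ N_P(G)) = 1` onto the directions (up to nonzero scalar) of the edges of
`P ∩ ρ_z P` over all `z ∈ P`: each such pair determines an edge `G ∩ ρ_z F` of `P ∩ ρ_z P` for
any `z ∈ (relint F + relint G)/2`, and every edge of `P ∩ ρ_z P` arises in this way. -/
theorem stmt7 {n : ℕ} (P : Set (Vec n)) (hP : IsPolytope P) :
    (∀ F G : Set (Vec n), IsFace P F → IsFace P G → F.Nonempty → G.Nonempty →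
      Module.finrank ℝ (Submodule.span ℝ
          (coneOf ((Neg.neg '' normalCone P F) ∪ normalCone P G))) + 1 = n →
      ∀ z ∈ avgSet (intrinsicInterior ℝ F) (intrinsicInterior ℝ G),
        IsEdge (P ∩ reflP z P) (G ∩ reflP z F)) ∧
    (∀ z ∈ P, ∀ E : Set (Vec n), IsEdge (P ∩ reflP z P) E →
      ∃ F G : Set (Vec n), IsFace P F ∧ IsFace P G ∧ F.Nonempty ∧ G.Nonempty ∧
        Module.finrank ℝ (Submodule.span ℝ
            (coneOf ((Neg.neg '' normalCone P F) ∪ normalCone P G))) + 1 = n ∧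
        z ∈ avgSet (intrinsicInterior ℝ F) (intrinsicInterior ℝ G) ∧
        E = G ∩ reflP z F) := by
  obtain ⟨S, rfl⟩ := hP
  refine ⟨fun F G hF hG _ _ hrank z hz => ?_, fun z _ E ⟨hE, hEdim⟩ => ?_⟩
  · obtain ⟨a, rfl⟩ := isFace_iff.1 hF
    obtain ⟨b, rfl⟩ := isFace_iff.1 hG
    exact isEdge_inter_reflP_of_finrank S a b hrank hz
  · obtain ⟨c, rfl⟩ := isFace_iff.1 hE
    obtain ⟨bF, bG, hrank, ⟨f, hf, g, hg, hz⟩, hEq⟩ := exists_eq_inter_reflP_of_sdim_eq_one S hEdim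
    exact ⟨argmaxSet bF _, argmaxSet bG _, ⟨bF, rfl⟩, ⟨bG, rfl⟩, ⟨f, intrinsicInterior_subset hf⟩,
      ⟨g, intrinsicInterior_subset hg⟩, hrank, ⟨f, hf, g, hg, hz⟩, hEq⟩
end
end

section
/- Let P ⊆ ℝⁿ be a polytope and let v, w ∈ ℝⁿ belong to the same chamber of the fundamental hyperplane arrangement H_P. Then (P,v) and (P,w) are positively oriented and they define the same bot-top diagonal: Δ_{(P,v)} = Δ_{(P,w)}, i.e. for every z ∈ P one has bot_v(P∩ρ_zP) = bot_w(P∩ρ_zP) and top_v(P∩ρ_zP) = top_w(P∩ρ_zP). -/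
open scoped BigOperators

noncomputable section

/-- `v` and `w` belong to the same chamber of the fundamental hyperplane arrangement `H_P`:
they lie strictly on the same side of every hyperplane of `H_P`, i.e. they pair with a strictly
positive product against every direction of an edge of `P ∩ ρ_z P`, `z ∈ P`. -/
def SameChamber {n : ℕ} (P : Set (Vec n)) (v w : Vec n) : Prop :=
  ∀ d, EdgeDir P d → 0 < dot d v * dot d w

/-!
The set `P ∩ ρ_z P` is again a polytope. Write a point of `conv S ∩ conv T` as a convex combination
with positive weights over some `A ⊆ S` and over some `B ⊆ T`. If two points share such
supports `A` and `B`, each can be pushed slightly past itself away from the other inside both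
hulls, so an extreme point is determined by its pair `(A, B)`. There are therefore finitely many
extreme points, and Krein–Milman gives the polytope.

On a polytope `conv V`, a functional perpendicular to no edge has a unique maximizing vertex:
every face with two vertices contains an edge. To find it, turn the functional about a vertex
(gift wrapping) to get a smaller face with two vertices, and induct on the number of vertices.
If `v` and `w` lie in one chamber, every functional on the segment `[v, w]` has this property.
By connectedness of the segment, its maximizing vertex cannot change from `v` to `w`.
Minimizers of `v` are the maximizers of `-v`.
-/

section PosCombination

variable {E : Type*} [AddCommGroup E] [Module ℝ E]

def IsPosCombination (A : Finset E) (x : E) : Prop :=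
  ∃ μ : E → ℝ, (∀ y ∈ A, 0 < μ y) ∧ ∑ y ∈ A, μ y = 1 ∧ ∑ y ∈ A, μ y • y = x

lemma IsPosCombination.mem_convexHull {A : Finset E} {x : E} (hx : IsPosCombination A x) :
    x ∈ convexHull ℝ (A : Set E) := by
  obtain ⟨μ, hμ, hμ1, rfl⟩ := hx
  exact Finset.mem_convexHull'.2 ⟨μ, fun y hy => (hμ y hy).le, hμ1, rfl⟩

lemma exists_isPosCombination_of_mem_convexHull {S : Finset E} {x : E}
    (hx : x ∈ convexHull ℝ (S : Set E)) : ∃ A ⊆ S, IsPosCombination A x := by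
  classical
  obtain ⟨μ, hμ0, hμ1, hμx⟩ := Finset.mem_convexHull'.1 hx
  have hzero : ∀ y ∈ S, y ∉ S.filter (0 < μ ·) → μ y = 0 := fun y hy hy' =>
    le_antisymm (not_lt.1 fun h => hy' (Finset.mem_filter.2 ⟨hy, h⟩)) (hμ0 y hy)
  refine ⟨S.filter (0 < μ ·), Finset.filter_subset _ _, μ, fun y hy => (Finset.mem_filter.1 hy).2,
    ?_, ?_⟩
  · rwa [Finset.sum_subset (Finset.filter_subset _ _) hzero]
  · rwa [Finset.sum_subset (Finset.filter_subset _ _) fun y hy hy' => by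
      rw [hzero y hy hy', zero_smul]]

lemma IsPosCombination.exists_add_smul_sub_mem {A : Finset E} {x x' : E}
    (hx : IsPosCombination A x) (hx' : x' ∈ convexHull ℝ (A : Set E)) :
    ∃ ε : ℝ, 0 < ε ∧ ∀ η ∈ Set.Icc 0 ε, x + η • (x - x') ∈ convexHull ℝ (A : Set E) := by
  obtain ⟨μ, hμ, hμ1, rfl⟩ := hx
  obtain ⟨μ', hμ'0, hμ'1, rfl⟩ := Finset.mem_convexHull'.1 hx'
  have hA : A.Nonempty := Finset.nonempty_of_sum_ne_zero (by rw [hμ1]; exact one_ne_zero)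
  obtain ⟨m, hm, hmin⟩ := A.exists_min_image μ hA
  refine ⟨μ m, hμ m hm, fun η ⟨hη0, hηm⟩ => Finset.mem_convexHull'.2
    ⟨fun y => (1 + η) * μ y - η * μ' y, fun y hy => ?_, ?_, ?_⟩⟩
  · have hμ'y : μ' y ≤ 1 := hμ'1 ▸ Finset.single_le_sum hμ'0 hy
    nlinarith [hmin y hy, hμ y hy]
  · simp only [Finset.sum_sub_distrib, ← Finset.mul_sum, hμ1, hμ'1]
    ring
  · simp only [sub_smul, mul_smul, Finset.sum_sub_distrib, ← Finset.smul_sum]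
    module

lemma eq_of_isPosCombination_of_mem_extremePoints {S T A B : Finset E} {x x' : E}
    (hAS : A ⊆ S) (hBT : B ⊆ T)
    (hx : x ∈ (convexHull ℝ (S : Set E) ∩ convexHull ℝ (T : Set E)).extremePoints ℝ)
    (hxA : IsPosCombination A x) (hxB : IsPosCombination B x)
    (hx'A : IsPosCombination A x') (hx'B : IsPosCombination B x') : x' = x := by
  have hA : convexHull ℝ (A : Set E) ⊆ convexHull ℝ (S : Set E) := convexHull_mono hAS
  have hB : convexHull ℝ (B : Set E) ⊆ convexHull ℝ (T : Set E) := convexHull_mono hBT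
  obtain ⟨ε₁, hε₁, h₁⟩ := hxA.exists_add_smul_sub_mem hx'A.mem_convexHull
  obtain ⟨ε₂, hε₂, h₂⟩ := hxB.exists_add_smul_sub_mem hx'B.mem_convexHull
  set ε := min ε₁ ε₂
  have hε : 0 < ε := lt_min hε₁ hε₂
  have hy : x + ε • (x - x') ∈ convexHull ℝ (S : Set E) ∩ convexHull ℝ (T : Set E) :=
    ⟨hA (h₁ ε ⟨hε.le, min_le_left _ _⟩), hB (h₂ ε ⟨hε.le, min_le_right _ _⟩)⟩
  have hseg : x ∈ openSegment ℝ (x + ε • (x - x')) x' :=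
    ⟨1 / (1 + ε), ε / (1 + ε), by positivity, by positivity, by field_simp, by
      match_scalars <;> field_simp; ring⟩
  exact (mem_extremePoints.1 hx).2 _ hy x' ⟨hA hx'A.mem_convexHull, hB hx'B.mem_convexHull⟩
    hseg |>.2

lemma extremePoints_convexHull_inter_convexHull_finite (S T : Finset E) :
    (convexHull ℝ (S : Set E) ∩ convexHull ℝ (T : Set E)).extremePoints ℝ |>.Finite := by
  have hsupp : ∀ x ∈ (convexHull ℝ (S : Set E) ∩ convexHull ℝ (T : Set E)).extremePoints ℝ,
      ∃ AB : Finset E × Finset E, AB.1 ⊆ S ∧ AB.2 ⊆ T ∧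
        IsPosCombination AB.1 x ∧ IsPosCombination AB.2 x := fun x hx => by
    obtain ⟨A, hAS, hA⟩ := exists_isPosCombination_of_mem_convexHull (extremePoints_subset hx).1
    obtain ⟨B, hBT, hB⟩ := exists_isPosCombination_of_mem_convexHull (extremePoints_subset hx).2
    exact ⟨(A, B), hAS, hBT, hA, hB⟩
  choose! f hfS hfT hfA hfB using hsupp
  refine Set.Finite.of_finite_image (f := f) ((S.powerset ×ˢ T.powerset).finite_toSet.subset ?_) ?_
  · rintro _ ⟨x, hx, rfl⟩
    simp only [Finset.coe_product, Set.mem_prod, Finset.mem_coe, Finset.mem_powerset]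
    exact ⟨hfS x hx, hfT x hx⟩
  · intro x hx x' hx' hxx'
    exact eq_of_isPosCombination_of_mem_extremePoints (hfS x' hx') (hfT x' hx') hx' (hfA x' hx')
      (hfB x' hx') (hxx' ▸ hfA x hx) (hxx' ▸ hfB x hx)

end PosCombination

lemma exists_finset_convexHull_inter_convexHull_eq {E : Type*} [NormedAddCommGroup E]
    [NormedSpace ℝ E] (S T : Finset E) :
    ∃ V : Finset E,
      convexHull ℝ (S : Set E) ∩ convexHull ℝ (T : Set E) = convexHull ℝ (V : Set E) := by
  have hfin := extremePoints_convexHull_inter_convexHull_finite S T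
  refine ⟨hfin.toFinset, ?_⟩
  rw [Set.Finite.coe_toFinset, ← (hfin.isClosed_convexHull ℝ).closure_eq,
    closure_convexHull_extremePoints]
  · exact (S.finite_toSet.isCompact_convexHull ℝ).inter_right
      (T.finite_toSet.isClosed_convexHull ℝ)
  · exact (convex_convexHull ℝ _).inter (convex_convexHull ℝ _)

section Polytope

variable {n : ℕ}

lemma reflP_convexHull (z : Vec n) (S : Set (Vec n)) :
    reflP z (convexHull ℝ S) = convexHull ℝ (reflP z S) := by
  have h : (fun x => (2 : ℝ) • z - x) = ⇑(AffineEquiv.pointReflection ℝ z) := by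
    ext x : 1
    rw [AffineEquiv.pointReflection_apply, vsub_eq_sub, vadd_eq_add]
    module
  simp only [reflP, h]
  exact AffineMap.image_convexHull (AffineEquiv.pointReflection ℝ z).toAffineMap S

lemma IsPolytope.inter_reflP {P : Set (Vec n)} (hP : IsPolytope P) (z : Vec n) :
    IsPolytope (P ∩ reflP z P) := by
  classical
  obtain ⟨S, rfl⟩ := hP
  obtain ⟨V, hV⟩ := exists_finset_convexHull_inter_convexHull_eq S (S.image ((2 : ℝ) • z - ·))
  refine ⟨V, ?_⟩
  rw [← hV, reflP_convexHull, Finset.coe_image]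
  rfl

lemma dot_eq_dotProduct (x y : Vec n) : dot x y = x ⬝ᵥ y := rfl

lemma dot_comm (x y : Vec n) : dot x y = dot y x := dotProduct_comm x y

lemma isLinearMap_dot (c : Vec n) : IsLinearMap ℝ (dot c) :=
  ⟨dotProduct_add c, fun r x => dotProduct_smul r c x⟩

lemma dot_self_pos {c : Vec n} (hc : c ≠ 0) : 0 < dot c c :=
  lt_of_le_of_ne (dotProduct_self_star_nonneg c) (Ne.symm (dotProduct_self_eq_zero.not.2 hc))

lemma dot_sub_right (c x y : Vec n) : dot c (x - y) = dot c x - dot c y := dotProduct_sub c x y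

lemma dot_smul_add_left (K : ℝ) (c c' x : Vec n) :
    dot (K • c + c') x = K * dot c x + dot c' x := by
  simp only [dot_eq_dotProduct, add_dotProduct, smul_dotProduct, smul_eq_mul]

lemma dot_lineMap (d v w : Vec n) (t : ℝ) :
    dot d (AffineMap.lineMap v w t) = (1 - t) * dot d v + t * dot d w := by
  simp only [AffineMap.lineMap_apply_module, dot_eq_dotProduct, dotProduct_add, dotProduct_smul,
    smul_eq_mul]

def maximizers (c : Vec n) (V : Finset (Vec n)) : Finset (Vec n) :=
  V.filter fun t => ∀ s ∈ V, dot c s ≤ dot c t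

lemma mem_maximizers {c t : Vec n} {V : Finset (Vec n)} :
    t ∈ maximizers c V ↔ t ∈ V ∧ ∀ s ∈ V, dot c s ≤ dot c t :=
  Finset.mem_filter

lemma maximizers_subset (c : Vec n) (V : Finset (Vec n)) : maximizers c V ⊆ V :=
  Finset.filter_subset _ _

lemma maximizers_nonempty (c : Vec n) {V : Finset (Vec n)} (hV : V.Nonempty) :
    (maximizers c V).Nonempty := by
  obtain ⟨t, ht, hmax⟩ := V.exists_max_image (dot c) hV
  exact ⟨t, mem_maximizers.2 ⟨ht, hmax⟩⟩

lemma dot_eq_of_mem_maximizers {c a b : Vec n} {V : Finset (Vec n)} (ha : a ∈ maximizers c V)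
    (hb : b ∈ maximizers c V) : dot c a = dot c b :=
  le_antisymm ((mem_maximizers.1 hb).2 a (mem_maximizers.1 ha).1)
    ((mem_maximizers.1 ha).2 b (mem_maximizers.1 hb).1)

lemma dot_lt_of_notMem_maximizers {c a t : Vec n} {V : Finset (Vec n)} (ha : a ∈ maximizers c V)
    (ht : t ∈ V) (ht' : t ∉ maximizers c V) : dot c t < dot c a := by
  simp only [mem_maximizers, ht, true_and, not_forall, not_le] at ht'
  obtain ⟨s, hs, hlt⟩ := ht'
  exact hlt.trans_le ((mem_maximizers.1 ha).2 s hs)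

lemma dot_le_of_mem_convexHull {c t₀ x : Vec n} {V : Finset (Vec n)}
    (ht₀ : t₀ ∈ maximizers c V) (hx : x ∈ convexHull ℝ (V : Set (Vec n))) :
    dot c x ≤ dot c t₀ :=
  convexHull_min (fun s hs => (mem_maximizers.1 ht₀).2 s hs)
    (convex_halfSpace_le (isLinearMap_dot c) _) hx

lemma dot_eq_of_mem_convexHull_maximizers {c t₀ x : Vec n} {V : Finset (Vec n)}
    (ht₀ : t₀ ∈ maximizers c V) (hx : x ∈ convexHull ℝ (maximizers c V : Set (Vec n))) :
    dot c x = dot c t₀ :=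
  convexHull_min (fun _ hs => dot_eq_of_mem_maximizers hs ht₀)
    (convex_hyperplane (isLinearMap_dot c) _) hx

/-- In a convex combination attaining the maximum of `dot c`, every non-maximizer has weight
zero. -/
lemma mem_convexHull_maximizers {c t₀ x : Vec n} {V : Finset (Vec n)}
    (ht₀ : t₀ ∈ maximizers c V) (hx : x ∈ convexHull ℝ (V : Set (Vec n)))
    (hxt₀ : dot c t₀ ≤ dot c x) : x ∈ convexHull ℝ (maximizers c V : Set (Vec n)) := by
  obtain ⟨μ, hμ0, hμ1, rfl⟩ := Finset.mem_convexHull'.1 hx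
  have hgap : ∑ y ∈ V, μ y * (dot c t₀ - dot c y) = 0 := by
    have hdot : dot c (∑ y ∈ V, μ y • y) = ∑ y ∈ V, μ y * dot c y := by
      simp [dot_eq_dotProduct, dotProduct_sum, dotProduct_smul]
    simp only [mul_sub, Finset.sum_sub_distrib, ← Finset.sum_mul, hμ1]
    linarith [dot_le_of_mem_convexHull ht₀ hx]
  have hzero : ∀ y ∈ V, y ∉ maximizers c V → μ y = 0 := fun y hy hy' => by
    have hterm := (Finset.sum_eq_zero_iff_of_nonneg fun y hy => mul_nonneg (hμ0 y hy)
      (sub_nonneg.2 ((mem_maximizers.1 ht₀).2 y hy))).1 hgap y hy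
    exact (mul_eq_zero.1 hterm).resolve_right
      (sub_pos.2 (dot_lt_of_notMem_maximizers ht₀ hy hy')).ne'
  refine Finset.mem_convexHull'.2 ⟨μ, fun y hy => hμ0 y (maximizers_subset c V hy), ?_, ?_⟩
  · rwa [Finset.sum_subset (maximizers_subset c V) hzero]
  · exact Finset.sum_subset (maximizers_subset c V) fun y hy hy' => by
      rw [hzero y hy hy', zero_smul]

lemma setOf_isTopOf_convexHull (c : Vec n) (V : Finset (Vec n)) :
    {x | IsTopOf (convexHull ℝ (V : Set (Vec n))) c x} =
      convexHull ℝ (maximizers c V : Set (Vec n)) := by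
  rcases V.eq_empty_or_nonempty with rfl | hV
  · simp [maximizers, IsTopOf]
  obtain ⟨t₀, ht₀⟩ := maximizers_nonempty c hV
  have ht₀V : t₀ ∈ convexHull ℝ (V : Set (Vec n)) :=
    subset_convexHull ℝ _ (maximizers_subset c V ht₀)
  ext x
  refine ⟨fun ⟨hx, hxmax⟩ => mem_convexHull_maximizers ht₀ hx (hxmax t₀ ht₀V), fun hx => ?_⟩
  refine ⟨convexHull_mono (Finset.coe_subset.2 (maximizers_subset c V)) hx, fun y hy => ?_⟩
  rw [dot_eq_of_mem_convexHull_maximizers ht₀ hx]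
  exact dot_le_of_mem_convexHull ht₀ hy

lemma eventually_dot_smul_add_lt (c c' : Vec n) (V : Finset (Vec n)) :
    ∀ᶠ K : ℝ in Filter.atTop, ∀ a ∈ maximizers c V, ∀ t ∈ V, t ∉ maximizers c V →
      dot (K • c + c') t < dot (K • c + c') a := by
  refine (Filter.eventually_all_finset _).2 fun a ha =>
    (Filter.eventually_all_finset _).2 fun t ht => ?_
  by_cases ht' : t ∈ maximizers c V
  · exact Filter.Eventually.of_forall fun _ h => absurd ht' h
  have hgap := sub_pos.2 (dot_lt_of_notMem_maximizers ha ht ht')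
  filter_upwards [(Filter.tendsto_id.atTop_mul_const hgap).eventually_gt_atTop
    (dot c' t - dot c' a)] with K hK _
  simp only [dot_smul_add_left, id] at hK ⊢
  linarith

/-- A face of a face of `conv V` is a face of `conv V`, on the level of vertex sets. -/
lemma exists_maximizers_eq_maximizers_maximizers (c c' : Vec n) (V : Finset (Vec n)) :
    ∃ c'', maximizers c'' V = maximizers c' (maximizers c V) := by
  obtain ⟨K, hK⟩ := (eventually_dot_smul_add_lt c c' V).exists
  refine ⟨K • c + c', Finset.ext fun x => ?_⟩
  simp only [mem_maximizers (c := K • c + c'), mem_maximizers (V := maximizers c V)]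
  constructor
  · rintro ⟨hxV, hxmax⟩
    have hxF : x ∈ maximizers c V := by
      by_contra hxF
      obtain ⟨t₀, ht₀⟩ := maximizers_nonempty c ⟨x, hxV⟩
      exact (hK t₀ ht₀ x hxV hxF).not_ge (hxmax t₀ (maximizers_subset c V ht₀))
    refine ⟨hxF, fun a ha => ?_⟩
    have := hxmax a (maximizers_subset c V ha)
    rw [dot_smul_add_left, dot_smul_add_left, dot_eq_of_mem_maximizers ha hxF] at this
    linarith
  · rintro ⟨hxF, hxmax⟩
    refine ⟨maximizers_subset c V hxF, fun s hs => ?_⟩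
    by_cases hsF : s ∈ maximizers c V
    · rw [dot_smul_add_left, dot_smul_add_left, dot_eq_of_mem_maximizers hsF hxF]
      linarith [hxmax s hsF]
    · exact (hK x hxF s hs hsF).le

lemma one_le_finrank_vectorSpan_iff {s : Set (Vec n)} :
    1 ≤ Module.finrank ℝ (vectorSpan ℝ s) ↔ s.Nontrivial := by
  rw [Nat.one_le_iff_ne_zero, Ne, Submodule.finrank_eq_zero, vectorSpan_eq_bot_iff_subsingleton,
    Set.not_subsingleton_iff]

lemma eq_zero_of_mem_vectorSpan_of_maximizers_eq {c : Vec n} {U : Finset (Vec n)}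
    (hc : c ∈ vectorSpan ℝ (U : Set (Vec n))) (hU : maximizers c U = U) : c = 0 := by
  have hker : vectorSpan ℝ (U : Set (Vec n)) ≤ LinearMap.ker (dotProductBilin ℝ ℝ c) := by
    rw [vectorSpan_def, Submodule.span_le]
    rintro _ ⟨a, ha, b, hb, rfl⟩
    change dot c (a - b) = 0
    rw [dot_sub_right, dot_eq_of_mem_maximizers (hU ▸ ha) (hU ▸ hb), sub_self]
  simpa [dotProduct_self_eq_zero] using hker hc

/-- Gift wrapping: turn `c` towards `e` around its maximizer `x₀` until a second point of `U`
attains the maximum. -/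
lemma exists_maximizers_smul_add_nontrivial {U : Finset (Vec n)} {c e x₀ s : Vec n}
    (hx₀ : x₀ ∈ maximizers c U) (hs : s ∈ U) (he : dot e x₀ < dot e s) :
    ∃ t : ℝ, 0 ≤ t ∧ ∃ u ∈ U, u ≠ x₀ ∧
      x₀ ∈ maximizers (t • e + c) U ∧ u ∈ maximizers (t • e + c) U := by
  classical
  obtain ⟨hx₀U, hx₀max⟩ := mem_maximizers.1 hx₀
  set R := U.filter fun u => dot e x₀ < dot e u
  set ratio : Vec n → ℝ := fun u => (dot c x₀ - dot c u) / (dot e u - dot e x₀)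
  obtain ⟨u, huR, humin⟩ := R.exists_min_image ratio ⟨s, Finset.mem_filter.2 ⟨hs, he⟩⟩
  obtain ⟨huU, hu⟩ := Finset.mem_filter.1 huR
  have ht : 0 ≤ ratio u := div_nonneg (sub_nonneg.2 (hx₀max u huU)) (sub_pos.2 hu).le
  have hle : ∀ y ∈ U, dot (ratio u • e + c) y ≤ dot (ratio u • e + c) x₀ := by
    intro y hy
    rw [dot_smul_add_left, dot_smul_add_left]
    by_cases hyR : dot e x₀ < dot e y
    · have := humin y (Finset.mem_filter.2 ⟨hy, hyR⟩)
      rw [le_div_iff₀ (sub_pos.2 hyR)] at this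
      linarith
    · nlinarith [hx₀max y hy]
  have hueq : dot (ratio u • e + c) u = dot (ratio u • e + c) x₀ := by
    rw [dot_smul_add_left, dot_smul_add_left]
    have := div_mul_cancel₀ (dot c x₀ - dot c u) (sub_pos.2 hu).ne'
    linarith
  exact ⟨ratio u, ht, u, huU, fun h => (h ▸ hu).false, mem_maximizers.2 ⟨hx₀U, hle⟩,
    mem_maximizers.2 ⟨huU, hueq ▸ hle⟩⟩

lemma exists_maximizers_ssubset_nontrivial {U : Finset (Vec n)}
    (hU : 2 ≤ Module.finrank ℝ (vectorSpan ℝ (U : Set (Vec n)))) :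
    ∃ c, maximizers c U ⊂ U ∧ (maximizers c U).Nontrivial := by
  obtain ⟨u₁, hu₁, u₂, hu₂, hu₁₂⟩ := one_le_finrank_vectorSpan_iff.1 (one_le_two.trans hU)
  set c := u₁ - u₂
  have hc : c ≠ 0 := sub_ne_zero.2 hu₁₂
  obtain ⟨x₀, hx₀⟩ := maximizers_nonempty c ⟨u₁, hu₁⟩
  have hx₀U : x₀ ∈ (U : Set (Vec n)) := maximizers_subset c U hx₀
  obtain ⟨s, hs, hsc⟩ : ∃ s ∈ U, s - x₀ ∉ ℝ ∙ c := by
    by_contra! hall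
    have hle : vectorSpan ℝ (U : Set (Vec n)) ≤ ℝ ∙ c := by
      rw [vectorSpan_eq_span_vsub_set_right ℝ hx₀U, Submodule.span_le]
      rintro _ ⟨y, hy, rfl⟩
      exact hall y hy
    have := Submodule.finrank_mono hle
    rw [finrank_span_singleton hc] at this
    omega
  set e := s - x₀
  have he : dot e x₀ < dot e s := by
    have : dot e s - dot e x₀ = dot e e := (dot_sub_right e s x₀).symm
    linarith [dot_self_pos (show e ≠ 0 from fun h => hsc (h ▸ Submodule.zero_mem _))]
  obtain ⟨t, -, u, -, hux₀, hx₀t, hut⟩ := exists_maximizers_smul_add_nontrivial hx₀ hs he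
  refine ⟨t • e + c, Finset.ssubset_iff_subset_ne.2 ⟨maximizers_subset _ U, fun heq => ?_⟩,
    u, hut, x₀, hx₀t, hux₀⟩
  have hspan : t • e + c ∈ vectorSpan ℝ (U : Set (Vec n)) :=
    add_mem (Submodule.smul_mem _ t (vsub_mem_vectorSpan ℝ hs hx₀U))
      (vsub_mem_vectorSpan ℝ hu₁ hu₂)
  have h0 := eq_zero_of_mem_vectorSpan_of_maximizers_eq hspan heq
  have ht : t ≠ 0 := by
    rintro rfl
    exact hc (by simpa using h0)
  apply hsc
  rw [← Submodule.smul_mem_iff _ ht, eq_neg_of_add_eq_zero_left h0]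
  exact neg_mem (Submodule.mem_span_singleton_self c)

/-- Every face of `conv V` with at least two points contains an edge. -/
lemma exists_maximizers_subset_finrank_eq_one {V : Finset (Vec n)} {c₀ : Vec n}
    (h : (maximizers c₀ V).Nontrivial) :
    ∃ c, maximizers c V ⊆ maximizers c₀ V ∧
      Module.finrank ℝ (vectorSpan ℝ (maximizers c V : Set (Vec n))) = 1 := by
  induction hk : (maximizers c₀ V).card using Nat.strong_induction_on generalizing c₀ with
  | _ k ih =>
  rcases (one_le_finrank_vectorSpan_iff.2 h).eq_or_lt with h1 | h2
  · exact ⟨c₀, subset_rfl, h1.symm⟩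
  obtain ⟨c₁, hss, hnt⟩ := exists_maximizers_ssubset_nontrivial h2
  obtain ⟨c₂, hc₂⟩ := exists_maximizers_eq_maximizers_maximizers c₀ c₁ V
  rw [← hc₂] at hss hnt
  obtain ⟨c, hsub, hc⟩ := ih _ (hk ▸ Finset.card_lt_card hss) hnt rfl
  exact ⟨c, hsub.trans hss.subset, hc⟩

lemma Oriented.maximizers_subsingleton {V : Finset (Vec n)} {u : Vec n}
    (hu : Oriented (convexHull ℝ (V : Set (Vec n))) u) :
    (maximizers u V : Set (Vec n)).Subsingleton := by
  refine Set.not_nontrivial_iff.1 fun h => ?_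
  obtain ⟨c, hsub, hc⟩ := exists_maximizers_subset_finrank_eq_one h
  obtain ⟨a, ha, b, hb, hab⟩ := one_le_finrank_vectorSpan_iff.1 hc.ge
  have hdir : (affineSpan ℝ (convexHull ℝ (maximizers c V : Set (Vec n)))).direction =
      vectorSpan ℝ (maximizers c V : Set (Vec n)) := by
    rw [affineSpan_convexHull, direction_affineSpan]
  have hE : IsEdge (convexHull ℝ (V : Set (Vec n))) (convexHull ℝ (maximizers c V : Set (Vec n))) :=
    ⟨⟨c, (setOf_isTopOf_convexHull c V).symm⟩, by rwa [sdim, hdir]⟩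
  refine hu _ hE (a - b) (hdir ▸ vsub_mem_vectorSpan ℝ ha hb) (sub_ne_zero.2 hab) ?_
  rw [dot_comm, dot_sub_right, dot_eq_of_mem_maximizers (hsub ha) (hsub hb), sub_self]

end Polytope

lemma IsPreconnected.subset_of_isClosed_biUnion_finset {α ι : Type*} [TopologicalSpace α]
    {s : Set α} (hs : IsPreconnected s) {I : Finset ι} {K : ι → Set α} (hK : ∀ i, IsClosed (K i))
    (hcover : s ⊆ ⋃ i ∈ I, K i) (hdisj : ∀ x ∈ s, ∀ i ∈ I, ∀ j ∈ I, x ∈ K i → x ∈ K j → i = j)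
    {a : ι} (ha : a ∈ I) (hsa : (s ∩ K a).Nonempty) : s ⊆ K a := by
  classical
  have hcover' : s ⊆ K a ∪ ⋃ i ∈ I.erase a, K i := fun x hx => by
    obtain ⟨i, hi, hxi⟩ := Set.mem_iUnion₂.1 (hcover hx)
    by_cases hia : i = a
    · exact Or.inl (hia ▸ hxi)
    · exact Or.inr (Set.mem_biUnion (Finset.mem_erase.2 ⟨hia, hi⟩) hxi)
  by_contra hnot
  obtain ⟨x₁, hx₁, hx₁a⟩ := Set.not_subset.1 hnot
  obtain ⟨x, hx, hxa, hxI⟩ := isPreconnected_closed_iff.1 hs _ _ (hK a)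
    (isClosed_biUnion_finset fun i _ => hK i) hcover' hsa
    ⟨x₁, hx₁, (hcover' hx₁).resolve_left hx₁a⟩
  obtain ⟨i, hi, hxi⟩ := Set.mem_iUnion₂.1 hxI
  obtain ⟨hia, hi⟩ := Finset.mem_erase.1 hi
  exact hia (hdisj x hx i hi a ha hxi hxa)

section Chamber

variable {n : ℕ}

def SameEdgeSigns (Q : Set (Vec n)) (v w : Vec n) : Prop :=
  ∀ E, IsEdge Q E → ∀ d ∈ (affineSpan ℝ E).direction, d ≠ 0 → 0 < dot d v * dot d w

namespace SameEdgeSigns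

variable {Q : Set (Vec n)} {v w : Vec n}

lemma symm (h : SameEdgeSigns Q v w) : SameEdgeSigns Q w v := fun E hE d hd hd0 =>
  mul_comm (dot d v) _ ▸ h E hE d hd hd0

lemma neg (h : SameEdgeSigns Q v w) : SameEdgeSigns Q (-v) (-w) := fun E hE d hd hd0 => by
  simpa [dot_eq_dotProduct] using h E hE d hd hd0

lemma oriented (h : SameEdgeSigns Q v w) : Oriented Q v := fun E hE d hd hd0 hv =>
  (h E hE d hd hd0).ne' (by rw [hv, zero_mul])

lemma lineMap (h : SameEdgeSigns Q v w) {t : ℝ} (ht : t ∈ Set.Icc (0 : ℝ) 1) :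
    SameEdgeSigns Q v (AffineMap.lineMap v w t) := fun E hE d hd hd0 => by
  have hvw := h E hE d hd hd0
  have hv : 0 < dot d v * dot d v := mul_self_pos.2 fun h0 => by simp [h0] at hvw
  rw [dot_lineMap, show dot d v * ((1 - t) * dot d v + t * dot d w) =
    (1 - t) * (dot d v * dot d v) + t * (dot d v * dot d w) by ring]
  rcases ht.1.eq_or_lt with rfl | ht0
  · simpa using hv
  · exact add_pos_of_nonneg_of_pos (mul_nonneg (sub_nonneg.2 ht.2) hv.le) (mul_pos ht0 hvw)

/-- Along the segment from `v` to `w` every functional is oriented, so its maximizer on `V` is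
unique; by connectedness of the segment it can never jump to another point. -/
lemma maximizers_subset {V : Finset (Vec n)}
    (h : SameEdgeSigns (convexHull ℝ (V : Set (Vec n))) v w) :
    maximizers v V ⊆ maximizers w V := by
  intro a ha
  set u : ℝ → Vec n := fun t => AffineMap.lineMap v w t
  have hcont : ∀ s, Continuous fun t => dot (u t) s := fun s => by
    simp only [u, dot_comm _ s, dot_lineMap]
    fun_prop
  set K : Vec n → Set ℝ := fun x => ⋂ s ∈ V, {t | dot (u t) s ≤ dot (u t) x}
  have hKmem : ∀ {x t}, x ∈ V → (t ∈ K x ↔ x ∈ maximizers (u t) V) := fun hx => by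
    simp [K, mem_maximizers, hx]
  have haV : a ∈ V := _root_.maximizers_subset v V ha
  have hIcc : Set.Icc (0 : ℝ) 1 ⊆ K a := by
    refine isPreconnected_Icc.subset_of_isClosed_biUnion_finset
      (fun x => isClosed_biInter fun s _ => isClosed_le (hcont s) (hcont x)) (fun t _ => ?_)
      (fun t ht x hx y hy htx hty => ?_) haV
      ⟨0, ⟨le_rfl, zero_le_one⟩, (hKmem haV).2 (by simpa [u] using ha)⟩
    · obtain ⟨x, hx⟩ := maximizers_nonempty (u t) ⟨a, haV⟩
      have hxV := _root_.maximizers_subset _ V hx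
      exact Set.mem_biUnion hxV ((hKmem hxV).2 hx)
    · exact (h.lineMap ht).symm.oriented.maximizers_subsingleton ((hKmem hx).1 htx)
        ((hKmem hy).1 hty)
  simpa [u] using (hKmem haV).1 (hIcc ⟨zero_le_one, le_rfl⟩)

lemma setOf_isTopOf_eq {V : Finset (Vec n)}
    (h : SameEdgeSigns (convexHull ℝ (V : Set (Vec n))) v w) :
    {x | IsTopOf (convexHull ℝ (V : Set (Vec n))) v x} =
      {x | IsTopOf (convexHull ℝ (V : Set (Vec n))) w x} := by
  rw [setOf_isTopOf_convexHull, setOf_isTopOf_convexHull,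
    h.maximizers_subset.antisymm h.symm.maximizers_subset]

end SameEdgeSigns

lemma setOf_isBotOf_eq_setOf_isTopOf_neg (Q : Set (Vec n)) (c : Vec n) :
    {x | IsBotOf Q c x} = {x | IsTopOf Q (-c) x} := by
  ext x
  simp [IsBotOf, IsTopOf, dot_eq_dotProduct]

namespace SameChamber

variable {P : Set (Vec n)} {v w : Vec n}

lemma symm (h : SameChamber P v w) : SameChamber P w v := fun d hd =>
  mul_comm (dot d v) _ ▸ h d hd

lemma sameEdgeSigns (h : SameChamber P v w) {z : Vec n} (hz : z ∈ P) :
    SameEdgeSigns (P ∩ reflP z P) v w := fun E hE d hd hd0 =>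
  h d ⟨hd0, z, hz, E, hE, hd⟩

lemma posOriented (h : SameChamber P v w) : PosOriented P v := fun _ hz =>
  (h.sameEdgeSigns hz).oriented

end SameChamber

end Chamber

/-- Chamber invariance. If `v` and `w` belong to the same chamber of the
fundamental hyperplane arrangement `H_P`, then `(P, v)` and `(P, w)` are positively oriented
and define the same bot-top diagonal: for every `z ∈ P` the minimizers (resp. maximizers) of
`⟨-, v⟩` and `⟨-, w⟩` on `P ∩ ρ_z P` coincide. -/
theorem stmt8 {n : ℕ} (P : Set (Vec n)) (v w : Vec n)
    (hP : IsPolytope P) (h : SameChamber P v w) :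
    PosOriented P v ∧ PosOriented P w ∧
    ∀ z ∈ P,
      {x | IsBotOf (P ∩ reflP z P) v x} = {x | IsBotOf (P ∩ reflP z P) w x} ∧
      {x | IsTopOf (P ∩ reflP z P) v x} = {x | IsTopOf (P ∩ reflP z P) w x} := by
  refine ⟨h.posOriented, h.symm.posOriented, fun z hz => ?_⟩
  obtain ⟨V, hV⟩ := hP.inter_reflP z
  have hvw := h.sameEdgeSigns hz
  rw [hV] at hvw ⊢
  simp only [setOf_isBotOf_eq_setOf_isTopOf_neg]
  exact ⟨hvw.neg.setOf_isTopOf_eq, hvw.setOf_isTopOf_eq⟩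

end
end
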